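/- arXiv:2001.04933 — 2 statements merged into one kernel-verified Lean document; each statement's English description precedes it below -/
import Mathlib

section
/- Let J, K ≥ 1 and N = JK. Let f_0,…,f_{K−1} : ℝ → ℝ a be an admissible function family and write f(t) = (f_0(t),…,f_{K−1}(t)) ∈ ℝ^K. Let g_0,…,g_{N−1} ∈ ℝ^J be vectors in general position such that no vector value occurs more than K times among g_0,…,g_{N−1}. Then for Lebesgue-almost every (t_0,…,t_{N−1}) ∈ ℝ^N, the N matrices g_n f(t_n)ᵀ form a basis of ℝ^{J×K}; equivalently, the JK×JK matrix whose n-th row is vec(g_n f(t_n)ᵀ) has nonzero determinant. -/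
/-!
Write `f(t) = ∑ₖ fₖ(t) eₖ`. By multilinearity, the determinant of the family `gₙ f(tₙ)ᵀ` is
`∑_α (∏ₙ f_{α n}(tₙ)) Φ(α)`, summed over all maps `α` from indices to columns, where `Φ(α)` is the
determinant of the family `gₙ e_{α n}ᵀ`. Such an expression with a nonzero coefficient vanishes
only on a null set: by Fubini, peel off one variable at a time, using that a nonzero combination
of the `fₖ` has a null zero set. A nonzero `Φ(α)` exists: sort the `gₙ` so that equal values are
consecutive and fill a `J × K` grid row by row. Runs have length at most `K`, so each column holds
`J` distinct values, which are linearly independent by general position; colouring each index by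
its column gives `Φ(α) ≠ 0`.
-/

open MeasureTheory Matrix

theorem Monotone.val_lt_add_of_apply_eq {n K : ℕ} {β : Type*} [PartialOrder β] {u : Fin n → β}
    (hu : Monotone u) (hK : ∀ i, {i' | u i' = u i}.ncard ≤ K) {i i' : Fin n} (hle : i ≤ i')
    (heq : u i = u i') : (i' : ℕ) < i + K := by
  have hsub : Set.Icc i i' ⊆ {i'' | u i'' = u i} := fun i'' hi'' =>
    le_antisymm (heq ▸ hu hi''.2) (hu hi''.1)
  have := (Set.ncard_le_ncard hsub (Set.toFinite _)).trans (hK i)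
  rw [← Finset.coe_Icc, Set.ncard_coe_finset, Fin.card_Icc] at this
  omega

theorem exists_prodEquiv_injective_column {J K : ℕ} {β : Type*} (g : Fin (J * K) → β)
    (hg : ∀ b, {n | g n = b}.ncard ≤ K) :
    ∃ e : Fin J × Fin K ≃ Fin (J * K), ∀ k, Function.Injective fun j => g (e (j, k)) := by
  -- any linear order works: sorting only serves to make equal values consecutive
  let _ : LinearOrder β := WellOrderingRel.isWellOrder.linearOrder
  let σ := Tuple.sort g
  have hfib : ∀ i, {i' | (g ∘ σ) i' = (g ∘ σ) i}.ncard ≤ K := fun i =>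
    (Set.ncard_preimage_of_injective_subset_range (s := {n | g n = g (σ i)})
      σ.injective (by simp)).trans_le (hg _)
  -- `finProdFinEquiv (j, k) = k + K * j`, so cells of one column are at least `K` apart
  have hsep : ∀ k {j₁ j₂ : Fin J}, j₁ < j₂ →
      g (σ (finProdFinEquiv (j₁, k))) ≠ g (σ (finProdFinEquiv (j₂, k))) := by
    intro k j₁ j₂ hlt heq
    have hle : finProdFinEquiv (j₁, k) ≤ finProdFinEquiv (j₂, k) := by
      simp only [Fin.le_iff_val_le_val, finProdFinEquiv_apply_val]
      gcongr
      exact hlt.le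
    have hclose := (Tuple.monotone_sort g).val_lt_add_of_apply_eq hfib hle heq
    simp only [finProdFinEquiv_apply_val] at hclose
    have : K * (j₁ + 1) ≤ K * j₂ := Nat.mul_le_mul_left K hlt
    linarith
  refine ⟨finProdFinEquiv.trans σ, fun k j₁ j₂ heq => ?_⟩
  by_contra hne
  rcases Ne.lt_or_gt hne with hlt | hlt
  · exact hsep k hlt heq
  · exact hsep k hlt heq.symm

theorem Matrix.linearIndependent_vecMulVec_single {R ι m n : Type*} [CommSemiring R]
    [DecidableEq n] {v : n → ι → m → R} (hv : ∀ k, LinearIndependent R (v k)) :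
    LinearIndependent R fun p : ι × n => vecMulVec (v p.2 p.1) (Pi.single p.2 1) := by
  -- the transpose of `vecMulVec w (Pi.single k 1)` is `Pi.single k w`
  have hsingle := (Pi.linearIndependent_single v hv).map_injOn
    (transposeLinearEquiv n m R R).toLinearMap (transposeLinearEquiv n m R R).injective.injOn
  convert hsingle.comp _
    ((Equiv.prodComm ι n).trans (Equiv.sigmaEquivProd n ι).symm).injective using 1
  ext p i k
  change _ = (Pi.single p.2 (v p.2 p.1) : n → m → R) k i
  simp [vecMulVec_apply, Pi.single_apply, apply_ite (fun w : m → R => w i)]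

theorem Matrix.vecMulVec_eq_sum_smul_single {R m n : Type*} [CommSemiring R] [Fintype n]
    [DecidableEq n] (w : m → R) (v : n → R) :
    vecMulVec w v = ∑ k, v k • vecMulVec w (Pi.single k 1) := by
  ext i j
  simp [vecMulVec_apply, Matrix.sum_apply, Pi.single_apply, mul_comm]

theorem Module.Basis.det_vecMulVec {R ι m n : Type*} [CommRing R] [Fintype ι] [DecidableEq ι]
    [Fintype n] [DecidableEq n] (b : Module.Basis ι R (Matrix m n R)) (w : ι → m → R)
    (v : ι → n → R) :
    b.det (fun i => vecMulVec (w i) (v i)) =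
      ∑ α : ι → n, (∏ i, v i (α i)) * b.det fun i => vecMulVec (w i) (Pi.single (α i) 1) := by
  rw [funext fun i => vecMulVec_eq_sum_smul_single (w i) (v i)]
  simp only [← AlternatingMap.coe_multilinearMap, MultilinearMap.map_sum,
    MultilinearMap.map_smul_univ, smul_eq_mul]

theorem Module.Basis.det_ne_zero_of_linearIndependent {K V ι : Type*} [Field K] [AddCommGroup V]
    [Module K V] [Fintype ι] [DecidableEq ι] (b : Module.Basis ι K V) {v : ι → V}
    (hv : LinearIndependent K v) : b.det v ≠ 0 :=
  have := Module.Finite.of_basis b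
  (b.is_basis_iff_det.1 ⟨hv,
    hv.span_eq_top_of_card_eq_finrank' (Module.finrank_eq_card_basis b).symm⟩).ne_zero

section TensorPolynomial

variable {X κ : Type*} [Fintype κ]

theorem Fin.sum_prod_mul_succ {R : Type*} [CommSemiring R] {N : ℕ} (φ : (Fin (N + 1) → κ) → R)
    (f : κ → X → R) (t : Fin (N + 1) → X) :
    ∑ α : Fin (N + 1) → κ, (∏ n, f (α n) (t n)) * φ α =
      ∑ β : Fin N → κ, (∏ n, f (β n) (t n.succ)) * ∑ k, φ (Fin.cons k β) * f k (t 0) := by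
  rw [← (Fin.consEquiv fun _ => κ).sum_comp, Fintype.sum_prod_type, Finset.sum_comm]
  refine Finset.sum_congr rfl fun β _ => ?_
  rw [Finset.mul_sum]
  refine Finset.sum_congr rfl fun k _ => ?_
  simp only [Fin.consEquiv, Equiv.coe_fn_mk, Fin.prod_univ_succ, Fin.cons_zero, Fin.cons_succ]
  ring

theorem ae_sum_prod_mul_ne_zero [MeasurableSpace X] (μ : Measure X) [SigmaFinite μ]
    {f : κ → X → ℝ} (hf : ∀ k, Measurable (f k))
    (hzero : ∀ c : κ → ℝ, c ≠ 0 → ∀ᵐ x ∂μ, ∑ k, c k * f k x ≠ 0) {N : ℕ}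
    (φ : (Fin N → κ) → ℝ) (hφ : φ ≠ 0) :
    ∀ᵐ t ∂Measure.pi fun _ : Fin N => μ, ∑ α, (∏ n, f (α n) (t n)) * φ α ≠ 0 := by
  induction N with
  | zero =>
    refine .of_forall fun t => ?_
    rw [Fintype.sum_unique, Finset.univ_eq_empty, Finset.prod_empty, one_mul]
    exact fun h => hφ (funext fun α => Subsingleton.elim α default ▸ h)
  | succ N ih =>
    obtain ⟨α₀, hα₀⟩ := Function.ne_iff.1 hφ
    have hslice : ∀ᵐ x ∂μ, (fun β => ∑ k, φ (Fin.cons k β) * f k x) ≠ 0 := by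
      have hc : (fun k => φ (Fin.cons k (Fin.tail α₀))) ≠ 0 :=
        Function.ne_iff.2 ⟨α₀ 0, by simpa using hα₀⟩
      filter_upwards [hzero _ hc] with x hx hψ
      exact hx (congrFun hψ (Fin.tail α₀))
    have hprod : ∀ᵐ p ∂μ.prod (Measure.pi fun _ : Fin N => μ),
        ∑ β : Fin N → κ, (∏ n, f (β n) (p.2 n)) * ∑ k, φ (Fin.cons k β) * f k p.1 ≠ 0 := by
      refine (Measure.ae_prod_iff_ae_ae ?_).2 ?_
      · exact (measurableSet_singleton 0).compl.preimage (by fun_prop)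
      · filter_upwards [hslice] with x hx using ih _ hx
    filter_upwards
      [(measurePreserving_piFinSuccAbove (fun _ => μ) 0).quasiMeasurePreserving.ae hprod] with t ht
    simpa [Fin.sum_prod_mul_succ, Fin.tail] using ht

end TensorPolynomial

theorem bilinear_measurements_basis_ae_general (J K : ℕ)
    (f : Fin K → ℝ → ℝ)
    (hmeas : ∀ k, Measurable (f k))
    (hzero : ∀ c : Fin K → ℝ, c ≠ 0 →
      volume {t : ℝ | ∑ k, c k * f k t = 0} = 0)
    (g : Fin (J * K) → Fin J → ℝ)
    (hgen : ∀ v : Fin J → Fin J → ℝ, (∀ i, ∃ n, v i = g n) →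
      Function.Injective v → LinearIndependent ℝ v)
    (hrep : ∀ a : Fin J → ℝ, {n : Fin (J * K) | g n = a}.ncard ≤ K) :
    ∀ᵐ t : Fin (J * K) → ℝ ∂volume,
      LinearIndependent ℝ
          (fun n : Fin (J * K) =>
            (Matrix.of fun (j : Fin J) (k : Fin K) => g n j * f k (t n) :
              Matrix (Fin J) (Fin K) ℝ)) ∧
        Submodule.span ℝ
            (Set.range (fun n : Fin (J * K) =>
              (Matrix.of fun (j : Fin J) (k : Fin K) => g n j * f k (t n) :
                Matrix (Fin J) (Fin K) ℝ))) = ⊤ := by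
  classical
  obtain ⟨e, he⟩ := exists_prodEquiv_injective_column g hrep
  let b := (Matrix.stdBasis ℝ (Fin J) (Fin K)).reindex finProdFinEquiv
  let Φ : (Fin (J * K) → Fin K) → ℝ := fun α =>
    b.det fun n => vecMulVec (g n) (Pi.single (α n) 1)
  have hΦ : Φ (fun n => (e.symm n).2) ≠ 0 := by
    refine b.det_ne_zero_of_linearIndependent ?_
    rw [← linearIndependent_equiv e]
    have hcomp : (fun n => vecMulVec (g n) (Pi.single (e.symm n).2 1)) ∘ e =
        fun p => vecMulVec (g (e p)) (Pi.single p.2 1) := by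
      ext p : 1
      simp
    rw [hcomp]
    exact linearIndependent_vecMulVec_single fun k => hgen _ (fun j => ⟨_, rfl⟩) (he k)
  have hzero' : ∀ c : Fin K → ℝ, c ≠ 0 → ∀ᵐ x, ∑ k, c k * f k x ≠ 0 := fun c hc =>
    ae_iff.2 (by simpa using hzero c hc)
  filter_upwards [ae_sum_prod_mul_ne_zero volume hmeas hzero' Φ fun h => hΦ (congrFun h _)]
    with t ht
  exact b.is_basis_iff_det.2 (isUnit_iff_ne_zero.2
    ((b.det_vecMulVec g fun n k => f k (t n)).trans_ne ht))

/-- **Sufficiency direction of Theorem 1 (Basis of Bilinear Measurements).**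
If `f₀, …, f_{K-1}` is an admissible function family, the vectors
`g₀, …, g_{JK-1} ∈ ℝ^J` are in general position and no value occurs more than
`K` times among them, then for Lebesgue-almost every tuple of sampling times the
`JK` rank-one matrices `gₙ f(tₙ)ᵀ` form a basis of `ℝ^{J×K}`. -/
theorem bilinear_measurements_basis_ae (J K : ℕ) (hJ : 1 ≤ J) (hK : 1 ≤ K)
    (f : Fin K → ℝ → ℝ)
    (hmeas : ∀ k, Measurable (f k))
    (hli : LinearIndependent ℝ f)
    (hzero : ∀ c : Fin K → ℝ, c ≠ 0 →
      volume {t : ℝ | ∑ k, c k * f k t = 0} = 0)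
    (g : Fin (J * K) → Fin J → ℝ)
    (hgen : ∀ v : Fin J → Fin J → ℝ, (∀ i, ∃ n, v i = g n) →
      Function.Injective v → LinearIndependent ℝ v)
    (hrep : ∀ a : Fin J → ℝ, {n : Fin (J * K) | g n = a}.ncard ≤ K) :
    ∀ᵐ t : Fin (J * K) → ℝ ∂volume,
      LinearIndependent ℝ
          (fun n : Fin (J * K) =>
            (Matrix.of fun (j : Fin J) (k : Fin K) => g n j * f k (t n) :
              Matrix (Fin J) (Fin K) ℝ)) ∧
        Submodule.span ℝ
            (Set.range (fun n : Fin (J * K) =>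
              (Matrix.of fun (j : Fin J) (k : Fin K) => g n j * f k (t n) :
                Matrix (Fin J) (Fin K) ℝ))) = ⊤ :=
  bilinear_measurements_basis_ae_general J K f hmeas hzero g hgen hrep
end

section
/- Let J, K ≥ 1, N = JK. Let f_0,…,f_{K−1} : ℝ → ℝ be functions, write f(t) = (f_0(t),…,f_{K−1}(t)) ∈ ℝ^K, let g_0,…,g_{N−1} ∈ ℝ^J, and let t_0,…,t_{N−1} ∈ ℝ. Let Γ ∈ ℝ^{N×N} be the matrix whose n-th row is vec(g_n f(t_n)ᵀ), i.e., Γ[n, kJ+j] = (g_n)_j · f_k(t_n) for 0 ≤ j < J, 0 ≤ k < K. For a permutation σ of {0,…,N−1} and k < K, let G_{σ,k} ∈ ℝ^{J×J} be the matrix whose j-th column is g_{σ(Jk+j)}. Then det(Γ) = Σ_{[σ] ∈ P_N/∼_J} sgn(σ*)·(∏_{k=0}^{K−1} det(G_{σ*,k}))·(∏_{k=0}^{K−1} ∏_{j=0}^{J−1} f_k(t_{σ*(Jk+j)})), where the sum is over the equivalence classes of the relation ∼_J (σ ∼_J π iff for every k < K the sets {σ(Jk+j) : j < J} and {π(Jk+j)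 : j < J} coincide) and σ* is any representative of the class, the summand being independent of the choice of representative. -/
open MeasureTheory

/-- The index `J*k + j` of `Fin (J*K)`, for `k < K` and `j < J`. -/
def blockIdx (J K : ℕ) (k : Fin K) (j : Fin J) : Fin (J * K) :=
  ⟨J * k + j, by
    have h1 : J * (k : ℕ) + (j : ℕ) < J * ((k : ℕ) + 1) := by
      rw [Nat.mul_succ]; exact Nat.add_lt_add_left j.isLt _
    exact lt_of_lt_of_le h1 (Nat.mul_le_mul le_rfl k.isLt)⟩

/-- The relation `σ ∼_J π`: for every `k < K`, the sets
`{σ(Jk+j) : j < J}` and `{π(Jk+j) : j < J}` coincide. -/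
def permBlockRel (J K : ℕ) (σ π : Equiv.Perm (Fin (J * K))) : Prop :=
  ∀ k : Fin K,
    Finset.image (fun j : Fin J => σ (blockIdx J K k j)) Finset.univ =
      Finset.image (fun j : Fin J => π (blockIdx J K k j)) Finset.univ

/-- The summand `sgn(σ) ⋅ (∏_k det G_{σ,k}) ⋅ (∏_k ∏_j f_k(t_{σ(Jk+j)}))`, where the
`j`-th column of `G_{σ,k} ∈ ℝ^{J×J}` is the vector `g_{σ(Jk+j)}`. -/
noncomputable def gammaTerm (J K : ℕ) (g : Fin (J * K) → Fin J → ℝ)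
    (f : Fin K → ℝ → ℝ) (t : Fin (J * K) → ℝ) (σ : Equiv.Perm (Fin (J * K))) : ℝ :=
  ((Equiv.Perm.sign σ : ℤ) : ℝ) *
    (∏ k : Fin K,
      Matrix.det (Matrix.of fun i j : Fin J => g (σ (blockIdx J K k j)) i)) *
    ∏ k : Fin K, ∏ j : Fin J, f k (t (σ (blockIdx J K k j)))

/-!
Expand `det Γ` by the Leibniz formula, indexing columns by the pairs `(k, j) ↦ Jk + j`. The
`∼_J`-class of `π` consists of the permutations `π ∘ ρ_τ`, where `ρ_τ` permutes each block
`{Jk + j : j < J}` by some `τ_k`. On this class the factor `∏ f_k(t_{σ(Jk+j)})` is constant, while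
the factors `sgn(τ_k) ∏_j (g_{π(Jk + τ_k j)})_j`, summed over each `τ_k` separately, give
`det G_{π,k}`. Hence each class contributes exactly the summand of any of its members.
-/

open Function Equiv Finset

theorem Equiv.Perm.exists_eq_comp_of_range_eq {ι α : Type*} {u v : ι → α}
    (hu : Injective u) (hv : Injective v) (h : Set.range u = Set.range v) :
    ∃ τ : Perm ι, u = v ∘ τ :=
  ⟨(ofInjective u hu).trans ((setCongr h).trans (ofInjective v hv).symm),
    funext fun i => by simp [apply_ofInjective_symm]⟩

theorem Finset.sum_eq_sum_filter_of_existsUnique_rep {α M : Type*} [Fintype α]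
    [AddCommMonoid M] (r : α → α → Prop) [DecidableRel r] (R : Finset α)
    (hR : ∀ a, ∃! b, b ∈ R ∧ r a b) (F : α → M) :
    ∑ a, F a = ∑ b ∈ R, ∑ a with r a b, F a := by
  classical
  choose rep hrep huniq using hR
  rw [← sum_fiberwise_of_maps_to (s := univ) (g := rep) fun a _ => (hrep a).1]
  refine sum_congr rfl fun b hb => sum_congr (filter_congr fun a _ => ?_) fun _ _ => rfl
  exact ⟨fun h => h ▸ (hrep a).2, fun h => (huniq a b ⟨hb, h⟩).symm⟩

theorem Matrix.det_of_cols {ι R : Type*} [Fintype ι] [DecidableEq ι] [CommRing R]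
    (v : ι → ι → R) :
    (Matrix.of fun i j => v j i).det = ∑ τ : Perm ι, (Perm.sign τ : R) * ∏ j, v (τ j) j := by
  rw [← Matrix.det_transpose, Matrix.det_apply']
  rfl

def blockEquiv (J K : ℕ) : Fin K × Fin J ≃ Fin (J * K) :=
  finProdFinEquiv.trans (finCongr (Nat.mul_comm K J))

@[simp] theorem blockEquiv_apply (J K : ℕ) (p : Fin K × Fin J) :
    blockEquiv J K p = blockIdx J K p.1 p.2 := by
  ext; simp [blockEquiv, blockIdx, add_comm]

@[simp] theorem blockEquiv_symm_blockIdx (J K : ℕ) (k : Fin K) (j : Fin J) :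
    (blockEquiv J K).symm (blockIdx J K k j) = (k, j) := by
  rw [Equiv.symm_apply_eq, blockEquiv_apply]

theorem blockIdx_injective (J K : ℕ) (k : Fin K) : Injective (blockIdx J K k) := by
  simpa [comp_def] using (blockEquiv J K).injective.comp (Prod.mk_right_injective k)

theorem prod_blockIdx {J K : ℕ} {M : Type*} [CommMonoid M] (φ : Fin (J * K) → M) :
    ∏ i, φ i = ∏ k, ∏ j, φ (blockIdx J K k j) := by
  rw [← (blockEquiv J K).prod_comp, Fintype.prod_prod_type]
  simp

def blockPerm {J K : ℕ} (τ : Fin K → Perm (Fin J)) : Perm (Fin (J * K)) :=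
  (blockEquiv J K).permCongr (prodCongrRight τ)

@[simp] theorem blockPerm_blockIdx {J K : ℕ} (τ : Fin K → Perm (Fin J)) (k : Fin K) (j : Fin J) :
    blockPerm τ (blockIdx J K k j) = blockIdx J K k (τ k j) := by
  simp [blockPerm, permCongr_apply]

theorem sign_blockPerm {J K : ℕ} (τ : Fin K → Perm (Fin J)) :
    Perm.sign (blockPerm τ) = ∏ k, Perm.sign (τ k) := by
  rw [blockPerm, Perm.sign_permCongr, Perm.sign_prodCongrRight]

theorem blockPerm_injective (J K : ℕ) : Injective (blockPerm (J := J) (K := K)) := by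
  intro τ τ' h
  funext k
  refine Equiv.ext fun j => blockIdx_injective J K k ?_
  simpa using congrArg (· (blockIdx J K k j)) h

theorem permBlockRel_iff_exists_blockPerm {J K : ℕ} (σ π : Perm (Fin (J * K))) :
    permBlockRel J K σ π ↔ ∃ τ, σ = π * blockPerm τ := by
  calc permBlockRel J K σ π ↔ ∀ k, ∃ τk : Perm (Fin J),
        σ ∘ blockIdx J K k = (π ∘ blockIdx J K k) ∘ τk := by
        refine forall_congr' fun k => ?_
        rw [← coe_inj]
        simp only [coe_image, coe_univ, Set.image_univ]
        refine ⟨Perm.exists_eq_comp_of_range_eq (σ.injective.comp (blockIdx_injective J K k))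
          (π.injective.comp (blockIdx_injective J K k)), ?_⟩
        rintro ⟨τk, h⟩
        change Set.range (σ ∘ blockIdx J K k) = Set.range (π ∘ blockIdx J K k)
        rw [h, EquivLike.range_comp]
    _ ↔ ∃ τ : Fin K → Perm (Fin J), ∀ k,
        σ ∘ blockIdx J K k = (π ∘ blockIdx J K k) ∘ τ k := Classical.skolem
    _ ↔ ∃ τ, σ = π * blockPerm τ := exists_congr fun τ => by
        rw [Equiv.ext_iff, ← (blockEquiv J K).forall_congr_right, Prod.forall]
        simp [funext_iff]

theorem permBlockRel_equivalence (J K : ℕ) : Equivalence (permBlockRel J K) where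
  refl _ _ := rfl
  symm h k := (h k).symm
  trans h h' k := (h k).trans (h' k)

theorem sum_blockPerm_leibniz {J K : ℕ} {f : Fin K → ℝ → ℝ} {g : Fin (J * K) → Fin J → ℝ}
    {t : Fin (J * K) → ℝ} {Γ : Matrix (Fin (J * K)) (Fin (J * K)) ℝ}
    (hΓ : ∀ n k j, Γ n (blockIdx J K k j) = g n j * f k (t n)) (π : Perm (Fin (J * K))) :
    ∑ τ : Fin K → Perm (Fin J),
        (Perm.sign (π * blockPerm τ) : ℝ) * ∏ i, Γ ((π * blockPerm τ) i) i =
      gammaTerm J K g f t π := by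
  have hterm : ∀ τ : Fin K → Perm (Fin J),
      (Perm.sign (π * blockPerm τ) : ℝ) * ∏ i, Γ ((π * blockPerm τ) i) i =
        Perm.sign π * (∏ k, (Perm.sign (τ k) : ℝ) * ∏ j, g (π (blockIdx J K k (τ k j))) j) *
          ∏ k, ∏ j, f k (t (π (blockIdx J K k j))) := by
    intro τ
    have hf : ∀ k, ∏ j, f k (t (π (blockIdx J K k (τ k j)))) =
        ∏ j, f k (t (π (blockIdx J K k j))) :=
      fun k => Equiv.prod_comp (τ k) fun j => f k (t (π (blockIdx J K k j)))
    simp only [prod_blockIdx (M := ℝ), Perm.mul_apply, blockPerm_blockIdx, hΓ, prod_mul_distrib,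
      hf, map_mul, sign_blockPerm, Units.val_mul, Int.cast_mul, Units.coe_prod, Int.cast_prod]
    ring
  have hdet : ∀ k, (Matrix.of fun i j => g (π (blockIdx J K k j)) i).det =
      ∑ τk : Perm (Fin J), (Perm.sign τk : ℝ) * ∏ j, g (π (blockIdx J K k (τk j))) j :=
    fun k => Matrix.det_of_cols fun j i => g (π (blockIdx J K k j)) i
  simp only [hterm, gammaTerm, hdet, Fintype.prod_sum, mul_sum, sum_mul]

open Classical in
theorem sum_permBlockRel_leibniz {J K : ℕ} {f : Fin K → ℝ → ℝ} {g : Fin (J * K) → Fin J → ℝ}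
    {t : Fin (J * K) → ℝ} {Γ : Matrix (Fin (J * K)) (Fin (J * K)) ℝ}
    (hΓ : ∀ n k j, Γ n (blockIdx J K k j) = g n j * f k (t n)) (π : Perm (Fin (J * K))) :
    ∑ σ with permBlockRel J K σ π, (Perm.sign σ : ℝ) * ∏ i, Γ (σ i) i =
      gammaTerm J K g f t π := by
  have hclass : ({σ | permBlockRel J K σ π} : Finset _) = univ.image (π * blockPerm ·) := by
    ext σ
    simp [permBlockRel_iff_exists_blockPerm, eq_comm]
  rw [hclass, sum_image fun τ _ τ' _ h => blockPerm_injective J K (mul_left_cancel h)]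
  exact sum_blockPerm_leibniz hΓ π

theorem det_gamma_factorization_general (J K : ℕ)
    (f : Fin K → ℝ → ℝ) (g : Fin (J * K) → Fin J → ℝ) (t : Fin (J * K) → ℝ)
    (Γ : Matrix (Fin (J * K)) (Fin (J * K)) ℝ)
    (hΓ : ∀ (n : Fin (J * K)) (k : Fin K) (j : Fin J),
      Γ n (blockIdx J K k j) = g n j * f k (t n)) :
    (∀ σ π : Equiv.Perm (Fin (J * K)), permBlockRel J K σ π →
        gammaTerm J K g f t σ = gammaTerm J K g f t π) ∧
      ∀ R : Finset (Equiv.Perm (Fin (J * K))),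
        (∀ σ : Equiv.Perm (Fin (J * K)), ∃! π, π ∈ R ∧ permBlockRel J K σ π) →
        Γ.det = ∑ σ ∈ R, gammaTerm J K g f t σ := by
  classical
  have hrel := permBlockRel_equivalence J K
  refine ⟨fun σ π h => ?_, fun R hR => ?_⟩
  · rw [← sum_permBlockRel_leibniz hΓ σ, ← sum_permBlockRel_leibniz hΓ π]
    exact sum_congr (filter_congr fun x _ => ⟨(hrel.trans · h), (hrel.trans · (hrel.symm h))⟩)
      fun _ _ => rfl
  · rw [Matrix.det_apply', sum_eq_sum_filter_of_existsUnique_rep _ R hR]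
    exact sum_congr rfl fun π _ => sum_permBlockRel_leibniz hΓ π

/-- **Determinant factorization from the proof of Theorem 1.**  If `Γ` is the
`JK×JK` matrix with entries `Γ[n, Jk+j] = (gₙ)_j ⋅ f_k(tₙ)`, then the summand
`sgn(σ)(∏_k det G_{σ,k})(∏_{k,j} f_k(t_{σ(Jk+j)}))` depends only on the
`∼_J`-class of `σ`, and for any system of representatives `R` of the classes,
`det Γ` equals the sum of these summands over `R`. -/
theorem det_gamma_factorization (J K : ℕ) (hJ : 1 ≤ J) (hK : 1 ≤ K)
    (f : Fin K → ℝ → ℝ) (g : Fin (J * K) → Fin J → ℝ) (t : Fin (J * K) → ℝ)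
    (Γ : Matrix (Fin (J * K)) (Fin (J * K)) ℝ)
    (hΓ : ∀ (n : Fin (J * K)) (k : Fin K) (j : Fin J),
      Γ n (blockIdx J K k j) = g n j * f k (t n)) :
    (∀ σ π : Equiv.Perm (Fin (J * K)), permBlockRel J K σ π →
        gammaTerm J K g f t σ = gammaTerm J K g f t π) ∧
      ∀ R : Finset (Equiv.Perm (Fin (J * K))),
        (∀ σ : Equiv.Perm (Fin (J * K)), ∃! π, π ∈ R ∧ permBlockRel J K σ π) →
        Γ.det = ∑ σ ∈ R, gammaTerm J K g f t σ :=
  det_gamma_factorization_general J K f g t Γ hΓ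
end
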